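/- Let φ : X → Y be a surjective continuous map of topological spaces and Γ_X a presheaf of modules on X satisfying condition (M). Then both (φ_*Γ_X)⁺ and φ_*(Γ_X⁺) are sheaves on Y, and the natural map (φ_*Γ_X)⁺ → φ_*(Γ_X⁺) is injective. -/

import Mathlib

open Set Function

universe u

/-- A presheaf of `R`-modules on (the subsets of) a topological space `X`. -/
structure Psh (R : Type u) [CommRing R] (X : Type u) [TopologicalSpace X] where
  sec : Set X → Type u
  addCommGroup : ∀ U, AddCommGroup (sec U)
  module : ∀ U, Module R (sec U)
  res : ∀ ⦃V U : Set X⦄, V ⊆ U → sec U →ₗ[R] sec V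
  res_self : ∀ (U : Set X) (s : sec U), res (subset_refl U) s = s
  res_res : ∀ {W V U : Set X} (hWV : W ⊆ V) (hVU : V ⊆ U) (s : sec U),
      res hWV (res hVU s) = res (hWV.trans hVU) s

attribute [instance] Psh.addCommGroup Psh.module

variable {R : Type u} [CommRing R] {X : Type u} [TopologicalSpace X]

/-- `𝒰` is an open cover of `V`. -/
structure IsCover (𝒰 : Set (Set X)) (V : Set X) : Prop where
  isOpen : ∀ U ∈ 𝒰, IsOpen U
  subset : ∀ U ∈ 𝒰, U ⊆ V
  covers : V ⊆ ⋃₀ 𝒰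

/-- `𝒲` refines `𝒰`. -/
def Refines (𝒲 𝒰 : Set (Set X)) : Prop := ∀ W ∈ 𝒲, ∃ U ∈ 𝒰, W ⊆ U

/-- The collection of all open subsets of `X`. -/
def allOpens (X : Type u) [TopologicalSpace X] : Set (Set X) := {U : Set X | IsOpen U}

/-- The submodule of compatible `𝒰`-families of a presheaf. -/
def compatSub (R : Type u) [CommRing R] (Γ : Psh R X) (𝒰 : Set (Set X)) :
    Submodule R (∀ U : ↥𝒰, Γ.sec ↑U) where
  carrier := {γ | ∀ U V : ↥𝒰,
    Γ.res (inter_subset_left : (↑U : Set X) ∩ ↑V ⊆ ↑U) (γ U) =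
    Γ.res (inter_subset_right : (↑U : Set X) ∩ ↑V ⊆ ↑V) (γ V)}
  add_mem' := by
    intro a b ha hb U V
    show Γ.res _ (a U + b U) = Γ.res _ (a V + b V)
    rw [map_add, map_add, ha U V, hb U V]
  zero_mem' := by
    intro U V
    show Γ.res _ 0 = Γ.res _ 0
    rw [map_zero, map_zero]
  smul_mem' := by
    intro c a ha U V
    show Γ.res _ (c • a U) = Γ.res _ (c • a V)
    rw [map_smul, map_smul, ha U V]

/-- The module of compatible `𝒰`-families. -/
abbrev Compat (R : Type u) [CommRing R] (Γ : Psh R X) (𝒰 : Set (Set X)) : Type u :=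
  ↥(compatSub R Γ 𝒰)

/-- The monopresheaf condition (M), with respect to covers drawn from `B`. -/
def CondM (R : Type u) [CommRing R] (Γ : Psh R X) (B : Set (Set X)) : Prop :=
  ∀ (V : Set X), IsOpen V → ∀ (𝒰 : Set (Set X)), 𝒰 ⊆ B → ∀ (hc : IsCover 𝒰 V),
    ∀ s : Γ.sec V, (∀ U (hU : U ∈ 𝒰), Γ.res (hc.subset U hU) s = 0) → s = 0

/-- The gluing condition (G), with respect to covers drawn from `B`. -/
def CondG (R : Type u) [CommRing R] (Γ : Psh R X) (B : Set (Set X)) : Prop :=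
  ∀ (V : Set X), IsOpen V → ∀ (𝒰 : Set (Set X)), 𝒰 ⊆ B → ∀ (hc : IsCover 𝒰 V),
    ∀ γ : Compat R Γ 𝒰, ∃ s : Γ.sec V,
      ∀ U (hU : U ∈ 𝒰), Γ.res (hc.subset U hU) s = γ.1 ⟨U, hU⟩

variable (R) in
/-- Data exhibiting the presheaf `P` as the plus construction `Γ⁺` of `Γ`, relative to
covers drawn from the collection `B`: each `P(V)` is the direct limit of the modules
`Γ(𝒰)` of compatible families over covers `𝒰 ⊆ B` of `V`, and the restriction maps of
`P` are the induced ones. -/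
structure PlusData (Γ P : Psh R X) (B : Set (Set X)) where
  ι : ∀ {V : Set X} {𝒰 : Set (Set X)}, 𝒰 ⊆ B → IsCover 𝒰 V → Compat R Γ 𝒰 →ₗ[R] P.sec V
  ι_refine : ∀ {V : Set X} {𝒰 𝒲 : Set (Set X)} (hU : 𝒰 ⊆ B) (hcU : IsCover 𝒰 V)
      (hW : 𝒲 ⊆ B) (hcW : IsCover 𝒲 V) (γ : Compat R Γ 𝒰) (δ : Compat R Γ 𝒲),
      Refines 𝒲 𝒰 →
      (∀ (W : ↥𝒲) (U : ↥𝒰) (h : (↑W : Set X) ⊆ ↑U), δ.1 W = Γ.res h (γ.1 U)) →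
      ι hW hcW δ = ι hU hcU γ
  ι_surj : ∀ {V : Set X}, IsOpen V → ∀ p : P.sec V,
      ∃ (𝒰 : Set (Set X)) (hU : 𝒰 ⊆ B) (hc : IsCover 𝒰 V) (γ : Compat R Γ 𝒰),
        ι hU hc γ = p
  ι_exact : ∀ {V : Set X} {𝒰 : Set (Set X)} (hU : 𝒰 ⊆ B) (hc : IsCover 𝒰 V)
      (γ : Compat R Γ 𝒰), ι hU hc γ = 0 →
      ∃ (𝒲 : Set (Set X)) (hW : 𝒲 ⊆ B) (hcW : IsCover 𝒲 V), Refines 𝒲 𝒰 ∧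
        ∀ (W : ↥𝒲) (U : ↥𝒰) (h : (↑W : Set X) ⊆ ↑U), Γ.res h (γ.1 U) = 0
  ι_res : ∀ {V' V : Set X} {𝒰 𝒲 : Set (Set X)} (hVV : V' ⊆ V) (hU : 𝒰 ⊆ B)
      (hc : IsCover 𝒰 V) (hW : 𝒲 ⊆ B) (hcW : IsCover 𝒲 V')
      (γ : Compat R Γ 𝒰) (δ : Compat R Γ 𝒲),
      Refines 𝒲 𝒰 →
      (∀ (W : ↥𝒲) (U : ↥𝒰) (h : (↑W : Set X) ⊆ ↑U), δ.1 W = Γ.res h (γ.1 U)) →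
      P.res hVV (ι hU hc γ) = ι hW hcW δ

variable (R) in
/-- A map of presheaves of modules on `X`. -/
structure PshHom (Γ₁ Γ₂ : Psh R X) where
  app : ∀ U : Set X, Γ₁.sec U →ₗ[R] Γ₂.sec U
  naturality : ∀ {V U : Set X} (h : V ⊆ U) (s : Γ₁.sec U),
      app V (Γ₁.res h s) = Γ₂.res h (app U s)

/-- The pushforward of a presheaf along a map `φ : X → Y`. -/
def pushf {Y : Type u} [TopologicalSpace Y] (R : Type u) [CommRing R]
    {X : Type u} [TopologicalSpace X] (φ : X → Y) (Γ : Psh R X) : Psh R Y where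
  sec U := Γ.sec (φ ⁻¹' U)
  addCommGroup U := Γ.addCommGroup _
  module U := Γ.module _
  res _ _ h := Γ.res (preimage_mono h)
  res_self U s := Γ.res_self _ s
  res_res h1 h2 s := Γ.res_res _ _ s

/-!
With (M), a compatible family of `Γ` that represents `0` in `Γ⁺` is itself `0`: it vanishes on a
refinement, hence on each of its own opens by (M). So the structure maps `Γ(𝒰) → Γ⁺(V)` are
injective, and two representatives whose classes agree on an overlap agree on the overlaps of
their opens. This yields (M) for `Γ⁺` and lets local representatives of a compatible family of
`Γ⁺` be glued on the union of their covers, giving (G). Preimages of covers are covers, so `φ_*Γ`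
inherits (M) and `φ_*` preserves (M) and (G); this gives the two sheaf statements. Finally `θ`
sends the class of `γ` over `𝒰` to the class of the same family over `φ⁻¹(𝒰)`, so injectivity of
the structure maps of `Γ⁺` forces `γ = 0`.
-/

namespace Psh

def IsCompatFamily (Γ : Psh R X) {ι : Type u} (A : ι → Set X) (s : ∀ i, Γ.sec (A i)) : Prop :=
  ∀ i j, Γ.res (inter_subset_left : A i ∩ A j ⊆ A i) (s i) = Γ.res inter_subset_right (s j)

namespace IsCompatFamily

variable {Γ : Psh R X} {ι : Type u} {A : ι → Set X} {s : ∀ i, Γ.sec (A i)}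

theorem res_eq (hs : Γ.IsCompatFamily A s) {W : Set X} {i j : ι} (h : W ⊆ A i)
    (h' : W ⊆ A j) : Γ.res h (s i) = Γ.res h' (s j) := by
  have hW : W ⊆ A i ∩ A j := subset_inter h h'
  rw [← Γ.res_res hW inter_subset_left, ← Γ.res_res hW inter_subset_right, hs i j]

noncomputable def restrict (hs : Γ.IsCompatFamily A s) (𝒲 : Set (Set X))
    (hr : ∀ W ∈ 𝒲, ∃ i, W ⊆ A i) : Compat R Γ 𝒲 :=
  ⟨fun W => Γ.res (hr W W.2).choose_spec (s (hr W W.2).choose), fun W W' => by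
    show Γ.res _ (Γ.res _ _) = Γ.res _ (Γ.res _ _)
    rw [Γ.res_res, Γ.res_res]
    exact hs.res_eq _ _⟩

theorem res_restrict_apply (hs : Γ.IsCompatFamily A s) {𝒲 : Set (Set X)}
    (hr : ∀ W ∈ 𝒲, ∃ i, W ⊆ A i) (W : ↥𝒲) {W' : Set X} (h : W' ⊆ W) {i : ι}
    (h' : W' ⊆ A i) : Γ.res h ((hs.restrict 𝒲 hr).1 W) = Γ.res h' (s i) := by
  show Γ.res h (Γ.res _ _) = _
  rw [Γ.res_res]
  exact hs.res_eq _ _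

theorem restrict_apply (hs : Γ.IsCompatFamily A s) {𝒲 : Set (Set X)}
    (hr : ∀ W ∈ 𝒲, ∃ i, W ⊆ A i) (W : ↥𝒲) {i : ι} (h : ↑W ⊆ A i) :
    (hs.restrict 𝒲 hr).1 W = Γ.res h (s i) := by
  rw [← hs.res_restrict_apply hr W subset_rfl h, Γ.res_self]

end IsCompatFamily

end Psh

namespace Compat

variable {Γ : Psh R X} {𝒰 : Set (Set X)}

theorem isCompatFamily (γ : Compat R Γ 𝒰) :
    Γ.IsCompatFamily (fun U : ↥𝒰 => (U : Set X)) γ.1 :=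
  γ.2

noncomputable def restrict (γ : Compat R Γ 𝒰) (𝒲 : Set (Set X)) (h : Refines 𝒲 𝒰) :
    Compat R Γ 𝒲 :=
  γ.isCompatFamily.restrict 𝒲 fun W hW =>
    let ⟨U, hU, hWU⟩ := h W hW
    ⟨⟨U, hU⟩, hWU⟩

theorem restrict_apply (γ : Compat R Γ 𝒰) {𝒲 : Set (Set X)} (h : Refines 𝒲 𝒰) (W : ↥𝒲)
    (U : ↥𝒰) (hWU : (W : Set X) ⊆ U) : (γ.restrict 𝒲 h).1 W = Γ.res hWU (γ.1 U) :=
  γ.isCompatFamily.restrict_apply _ W hWU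

end Compat

namespace IsCover

variable {𝒰 𝒰' : Set (Set X)} {V V' : Set X}

theorem subset_allOpens (hc : IsCover 𝒰 V) : 𝒰 ⊆ allOpens X :=
  hc.isOpen

theorem image_inter_right (hc : IsCover 𝒰 V) {U : Set X} (hU : IsOpen U) (hUV : U ⊆ V) :
    IsCover ((· ∩ U) '' 𝒰) U where
  isOpen := by
    rintro _ ⟨W, hW, rfl⟩
    exact (hc.isOpen W hW).inter hU
  subset := by
    rintro _ ⟨W, -, rfl⟩
    exact inter_subset_right
  covers x hx := by
    obtain ⟨W, hW, hxW⟩ := hc.covers (hUV hx)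
    exact ⟨W ∩ U, mem_image_of_mem _ hW, hxW, hx⟩

theorem image2_inter (hc : IsCover 𝒰 V) (hc' : IsCover 𝒰' V') :
    IsCover (image2 (· ∩ ·) 𝒰 𝒰') (V ∩ V') where
  isOpen := by
    rintro _ ⟨W, hW, W', hW', rfl⟩
    exact (hc.isOpen W hW).inter (hc'.isOpen W' hW')
  subset := by
    rintro _ ⟨W, hW, W', hW', rfl⟩
    exact inter_subset_inter (hc.subset W hW) (hc'.subset W' hW')
  covers := by
    rintro x ⟨hx, hx'⟩
    obtain ⟨W, hW, hxW⟩ := hc.covers hx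
    obtain ⟨W', hW', hxW'⟩ := hc'.covers hx'
    exact ⟨W ∩ W', mem_image2_of_mem hW hW', hxW, hxW'⟩

theorem iUnion (hc : IsCover 𝒰 V) {𝒞 : ↥𝒰 → Set (Set X)} (hc𝒞 : ∀ U, IsCover (𝒞 U) U) :
    IsCover (⋃ U, 𝒞 U) V where
  isOpen W hW := by
    obtain ⟨U, hWU⟩ := mem_iUnion.1 hW
    exact (hc𝒞 U).isOpen W hWU
  subset W hW := by
    obtain ⟨U, hWU⟩ := mem_iUnion.1 hW
    exact ((hc𝒞 U).subset W hWU).trans (hc.subset U U.2)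
  covers x hx := by
    obtain ⟨U, hU, hxU⟩ := hc.covers hx
    obtain ⟨W, hW, hxW⟩ := (hc𝒞 ⟨U, hU⟩).covers hxU
    exact ⟨W, mem_iUnion.2 ⟨_, hW⟩, hxW⟩

end IsCover

theorem refines_image_inter_right {X : Type*} (𝒰 : Set (Set X)) (U : Set X) :
    Refines ((· ∩ U) '' 𝒰) 𝒰 := by
  rintro _ ⟨W, hW, rfl⟩
  exact ⟨W, hW, inter_subset_left⟩

theorem refines_image2_inter_left {X : Type*} (𝒰 𝒰' : Set (Set X)) :
    Refines (image2 (· ∩ ·) 𝒰 𝒰') 𝒰 := by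
  rintro _ ⟨W, hW, W', -, rfl⟩
  exact ⟨W, hW, inter_subset_left⟩

theorem refines_image2_inter_right {X : Type*} (𝒰 𝒰' : Set (Set X)) :
    Refines (image2 (· ∩ ·) 𝒰 𝒰') 𝒰' := by
  rintro _ ⟨W, -, W', hW', rfl⟩
  exact ⟨W', hW', inter_subset_right⟩

namespace PlusData

variable {Γ Q : Psh R X} (hQ : PlusData R Γ Q (allOpens X)) {𝒰 𝒲 : Set (Set X)} {V : Set X}

theorem ι_injective (hM : CondM R Γ (allOpens X)) (hU : 𝒰 ⊆ allOpens X) (hc : IsCover 𝒰 V) :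
    Injective (hQ.ι hU hc) := by
  refine (injective_iff_map_eq_zero _).2 fun γ hγ => Subtype.ext (funext fun U => ?_)
  obtain ⟨𝒲, -, hcW, href, hvanish⟩ := hQ.ι_exact hU hc γ hγ
  have hcU := hcW.image_inter_right (hc.isOpen U U.2) (hc.subset U U.2)
  refine hM U (hc.isOpen U U.2) _ hcU.subset_allOpens hcU _ ?_
  rintro _ ⟨W, hW, rfl⟩
  obtain ⟨U₀, hU₀, hWU₀⟩ := href W hW
  rw [γ.isCompatFamily.res_eq _ (inter_subset_left.trans hWU₀ : W ∩ U ⊆ (⟨U₀, hU₀⟩ : ↥𝒰)),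
    ← Γ.res_res inter_subset_left hWU₀, hvanish ⟨W, hW⟩ ⟨U₀, hU₀⟩ hWU₀, map_zero]

theorem res_ι {V' : Set X} (hVV : V' ⊆ V) (hU : 𝒰 ⊆ allOpens X) (hc : IsCover 𝒰 V)
    (hW : 𝒲 ⊆ allOpens X) (hcW : IsCover 𝒲 V') (href : Refines 𝒲 𝒰) (γ : Compat R Γ 𝒰) :
    Q.res hVV (hQ.ι hU hc γ) = hQ.ι hW hcW (γ.restrict 𝒲 href) :=
  hQ.ι_res hVV hU hc hW hcW γ _ href fun W U h => γ.restrict_apply href W U h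

theorem ι_restrict (hU : 𝒰 ⊆ allOpens X) (hc : IsCover 𝒰 V) (hW : 𝒲 ⊆ allOpens X)
    (hcW : IsCover 𝒲 V) (href : Refines 𝒲 𝒰) (γ : Compat R Γ 𝒰) :
    hQ.ι hW hcW (γ.restrict 𝒲 href) = hQ.ι hU hc γ :=
  hQ.ι_refine hU hc hW hcW γ _ href fun W U h => γ.restrict_apply href W U h

theorem condM (hQ : PlusData R Γ Q (allOpens X)) (hM : CondM R Γ (allOpens X)) :
    CondM R Q (allOpens X) := by
  intro V hV 𝒰 hU hc s hs
  obtain ⟨𝒰₀, hU₀, hc₀, γ, rfl⟩ := hQ.ι_surj hV s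
  have hc𝒟 : IsCover (image2 (· ∩ ·) 𝒰₀ 𝒰) V := inter_self V ▸ hc₀.image2_inter hc
  suffices h0 : γ.restrict _ (refines_image2_inter_left 𝒰₀ 𝒰) = 0 by
    rw [← hQ.ι_restrict hU₀ hc₀ hc𝒟.subset_allOpens hc𝒟 (refines_image2_inter_left 𝒰₀ 𝒰) γ, h0,
      map_zero]
  refine Subtype.ext (funext ?_)
  rintro ⟨_, A, hA, B, hB, rfl⟩
  -- the restriction of `γ` to the cover `(· ∩ B) '' 𝒰₀` of `B` represents `s|B = 0`
  have hcB := hc₀.image_inter_right (hc.isOpen B hB) (hc.subset B hB)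
  have hB0 : γ.restrict _ (refines_image_inter_right 𝒰₀ B) = 0 :=
    hQ.ι_injective hM hcB.subset_allOpens hcB <| by
      rw [← hQ.res_ι (hc.subset B hB) hU₀ hc₀, hs B hB, map_zero]
  have := congr_arg (fun δ => δ.1 ⟨A ∩ B, mem_image_of_mem _ hA⟩) hB0
  dsimp only at this
  rw [γ.restrict_apply _ _ ⟨A, hA⟩ inter_subset_left] at this ⊢
  exact this

theorem res_inter_eq_of_res_ι_eq (hM : CondM R Γ (allOpens X)) {U U' : Set X}
    {𝒞 𝒞' : Set (Set X)} (hC : 𝒞 ⊆ allOpens X) (hcC : IsCover 𝒞 U) (hC' : 𝒞' ⊆ allOpens X)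
    (hcC' : IsCover 𝒞' U') (σ : Compat R Γ 𝒞) (σ' : Compat R Γ 𝒞')
    (h : Q.res (inter_subset_left : U ∩ U' ⊆ U) (hQ.ι hC hcC σ) =
      Q.res inter_subset_right (hQ.ι hC' hcC' σ'))
    {A A' : Set X} (hA : A ∈ 𝒞) (hA' : A' ∈ 𝒞') :
    Γ.res (inter_subset_left : A ∩ A' ⊆ A) (σ.1 ⟨A, hA⟩) =
      Γ.res inter_subset_right (σ'.1 ⟨A', hA'⟩) := by
  have hc𝒟 := hcC.image2_inter hcC'
  rw [hQ.res_ι _ hC hcC hc𝒟.subset_allOpens hc𝒟 (refines_image2_inter_left 𝒞 𝒞'),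
    hQ.res_ι _ hC' hcC' hc𝒟.subset_allOpens hc𝒟 (refines_image2_inter_right 𝒞 𝒞')] at h
  have := congr_arg (fun δ => δ.1 ⟨A ∩ A', mem_image2_of_mem hA hA'⟩)
    (hQ.ι_injective hM _ hc𝒟 h)
  dsimp only at this
  rwa [σ.restrict_apply _ _ ⟨A, hA⟩ inter_subset_left,
    σ'.restrict_apply _ _ ⟨A', hA'⟩ inter_subset_right] at this

theorem condG (hQ : PlusData R Γ Q (allOpens X)) (hM : CondM R Γ (allOpens X)) :
    CondG R Q (allOpens X) := by
  intro V hV 𝒰 hU hc γ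
  choose 𝒞 h𝒞 hc𝒞 σ hσ using fun U : ↥𝒰 => hQ.ι_surj (hc.isOpen U U.2) (γ.1 U)
  have hcompat : Γ.IsCompatFamily (fun p : (U : ↥𝒰) × ↥(𝒞 U) => (p.2 : Set X))
      fun p => (σ p.1).1 p.2 := fun p q =>
    hQ.res_inter_eq_of_res_ι_eq hM (h𝒞 p.1) (hc𝒞 p.1) (h𝒞 q.1) (hc𝒞 q.1) (σ p.1) (σ q.1)
      (by rw [hσ, hσ]; exact γ.2 p.1 q.1) p.2.2 q.2.2
  have hc𝒲 : IsCover (⋃ U, 𝒞 U) V := hc.iUnion hc𝒞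
  refine ⟨hQ.ι hc𝒲.subset_allOpens hc𝒲 (hcompat.restrict _ fun W hW =>
    let ⟨U, hWU⟩ := mem_iUnion.1 hW
    ⟨⟨U, W, hWU⟩, subset_rfl⟩), fun U hU => ?_⟩
  rw [← hσ ⟨U, hU⟩]
  refine hQ.ι_res _ _ _ _ _ _ _ (fun W hW => ⟨W, mem_iUnion.2 ⟨_, hW⟩, subset_rfl⟩)
    fun W B h => ?_
  rw [hcompat.res_restrict_apply _ B h (i := ⟨⟨U, hU⟩, W⟩) subset_rfl, Γ.res_self]

end PlusData

section Pushforward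

variable {Y : Type u} [TopologicalSpace Y] {φ : X → Y} {Γ : Psh R X} {𝒰 : Set (Set Y)}

theorem IsCover.preimage (hφ : Continuous φ) {V : Set Y} (hc : IsCover 𝒰 V) :
    IsCover ((fun U => φ ⁻¹' U) '' 𝒰) (φ ⁻¹' V) where
  isOpen := by
    rintro _ ⟨U, hU, rfl⟩
    exact (hc.isOpen U hU).preimage hφ
  subset := by
    rintro _ ⟨U, hU, rfl⟩
    exact preimage_mono (hc.subset U hU)
  covers x hx := by
    obtain ⟨U, hU, hxU⟩ := hc.covers hx
    exact ⟨φ ⁻¹' U, mem_image_of_mem _ hU, hxU⟩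

theorem Compat.isCompatFamily_preimage (γ : Compat R (pushf R φ Γ) 𝒰) :
    Γ.IsCompatFamily (fun U : ↥𝒰 => φ ⁻¹' U) γ.1 :=
  γ.2

noncomputable def Compat.toPreimage (γ : Compat R (pushf R φ Γ) 𝒰) :
    Compat R Γ ((fun U => φ ⁻¹' U) '' 𝒰) :=
  γ.isCompatFamily_preimage.restrict _
    fun _ ⟨U, hU, hW⟩ => ⟨⟨U, hU⟩, hW.ge⟩

theorem Compat.toPreimage_apply (γ : Compat R (pushf R φ Γ) 𝒰) (U : ↥𝒰) :
    γ.toPreimage.1 ⟨φ ⁻¹' U, U, U.2, rfl⟩ = γ.1 U :=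
  (γ.isCompatFamily_preimage.restrict_apply _ _ (i := U) subset_rfl).trans (Γ.res_self _ _)

theorem CondM.pushf (hM : CondM R Γ (allOpens X)) (hφ : Continuous φ) :
    CondM R (pushf R φ Γ) (allOpens Y) := by
  intro V hV 𝒰 _ hc s hs
  have hc' := hc.preimage hφ
  refine hM _ (hV.preimage hφ) _ hc'.subset_allOpens hc' s ?_
  rintro _ ⟨U, hU, rfl⟩
  exact hs U hU

theorem CondG.pushf (hG : CondG R Γ (allOpens X)) (hφ : Continuous φ) :
    CondG R (pushf R φ Γ) (allOpens Y) := by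
  intro V hV 𝒰 _ hc γ
  have hc' := hc.preimage hφ
  obtain ⟨s, hs⟩ := hG _ (hV.preimage hφ) _ hc'.subset_allOpens hc' γ.toPreimage
  exact ⟨s, fun U hU => (hs _ (mem_image_of_mem _ hU)).trans (γ.toPreimage_apply ⟨U, hU⟩)⟩

theorem PshHom.injective_app_of_plusData {P : Psh R Y} {Q : Psh R X} (hφ : Continuous φ)
    (hM : CondM R Γ (allOpens X)) (hP : PlusData R (pushf R φ Γ) P (allOpens Y))
    (hQ : PlusData R Γ Q (allOpens X)) (θ : PshHom R P (pushf R φ Q))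
    (hθ : ∀ (V : Set Y) (𝒰 : Set (Set Y)) (hU : 𝒰 ⊆ allOpens Y) (hc : IsCover 𝒰 V)
      (γ : Compat R (pushf R φ Γ) 𝒰),
      θ.app V (hP.ι hU hc γ) = hQ.ι (hc.preimage hφ).subset_allOpens (hc.preimage hφ) γ.toPreimage)
    {V : Set Y} (hV : IsOpen V) : Injective (θ.app V) := by
  refine (injective_iff_map_eq_zero _).2 fun p hp => ?_
  obtain ⟨𝒰, hU, hc, γ, rfl⟩ := hP.ι_surj hV p
  have hc' := hc.preimage hφ
  have hδ : γ.toPreimage = 0 :=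
    hQ.ι_injective hM hc'.subset_allOpens hc'
      (((hθ V 𝒰 hU hc γ).symm.trans hp).trans (map_zero _).symm)
  have hγ : γ = 0 := Subtype.ext (funext fun U => by rw [← γ.toPreimage_apply U, hδ]; rfl)
  rw [hγ, map_zero]

end Pushforward

theorem statement4_general (R : Type u) [CommRing R] {X Y : Type u}
    [TopologicalSpace X] [TopologicalSpace Y]
    (φ : X → Y) (hφc : Continuous φ)
    (Γ : Psh R X) (hM : CondM R Γ (allOpens X))
    (P : Psh R Y) (hP : PlusData R (pushf R φ Γ) P (allOpens Y))
    (Q : Psh R X) (hQ : PlusData R Γ Q (allOpens X)) :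
    (CondM R P (allOpens Y) ∧ CondG R P (allOpens Y)) ∧
    (CondM R (pushf R φ Q) (allOpens Y) ∧ CondG R (pushf R φ Q) (allOpens Y)) ∧
    (∀ θ : PshHom R P (pushf R φ Q),
      (∀ (V : Set Y) (𝒰 : Set (Set Y)) (hU : 𝒰 ⊆ allOpens Y) (hc : IsCover 𝒰 V)
          (hU' : ((fun U => φ ⁻¹' U) '' 𝒰) ⊆ allOpens X)
          (hc' : IsCover ((fun U => φ ⁻¹' U) '' 𝒰) (φ ⁻¹' V))
          (γ : Compat R (pushf R φ Γ) 𝒰)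
          (δ : Compat R Γ ((fun U => φ ⁻¹' U) '' 𝒰)),
          (∀ (U : ↥𝒰), δ.1 ⟨φ ⁻¹' ↑U, ⟨↑U, U.2, rfl⟩⟩ = γ.1 U) →
          θ.app V (hP.ι hU hc γ) = hQ.ι hU' hc' δ) →
      ∀ (V : Set Y), IsOpen V → Function.Injective (θ.app V)) := by
  have hPM : CondM R (pushf R φ Γ) (allOpens Y) := hM.pushf hφc
  refine ⟨⟨hP.condM hPM, hP.condG hPM⟩, ⟨(hQ.condM hM).pushf hφc, (hQ.condG hM).pushf hφc⟩, ?_⟩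
  intro θ hθ V hV
  exact θ.injective_app_of_plusData hφc hM hP hQ
    (fun V 𝒰 hU hc γ => hθ V 𝒰 hU hc _ _ γ _ γ.toPreimage_apply) hV

/-- for a surjective continuous `φ : X → Y` and a presheaf `Γ` on `X`
satisfying (M), both `(φ_*Γ)⁺` and `φ_*(Γ⁺)` are sheaves on `Y` and the natural map
`(φ_*Γ)⁺ → φ_*(Γ⁺)` is injective.  Here `P` is `(φ_*Γ)⁺`, `Q` is `Γ⁺`, and the natural
map is any presheaf map `θ` compatible with the colimit structure maps. -/
theorem statement4 (R : Type u) [CommRing R] {X Y : Type u}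
    [TopologicalSpace X] [TopologicalSpace Y]
    (φ : X → Y) (hφc : Continuous φ) (hφs : Function.Surjective φ)
    (Γ : Psh R X) (hM : CondM R Γ (allOpens X))
    (P : Psh R Y) (hP : PlusData R (pushf R φ Γ) P (allOpens Y))
    (Q : Psh R X) (hQ : PlusData R Γ Q (allOpens X)) :
    (CondM R P (allOpens Y) ∧ CondG R P (allOpens Y)) ∧
    (CondM R (pushf R φ Q) (allOpens Y) ∧ CondG R (pushf R φ Q) (allOpens Y)) ∧
    (∀ θ : PshHom R P (pushf R φ Q),
      (∀ (V : Set Y) (𝒰 : Set (Set Y)) (hU : 𝒰 ⊆ allOpens Y) (hc : IsCover 𝒰 V)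
          (hU' : ((fun U => φ ⁻¹' U) '' 𝒰) ⊆ allOpens X)
          (hc' : IsCover ((fun U => φ ⁻¹' U) '' 𝒰) (φ ⁻¹' V))
          (γ : Compat R (pushf R φ Γ) 𝒰)
          (δ : Compat R Γ ((fun U => φ ⁻¹' U) '' 𝒰)),
          (∀ (U : ↥𝒰), δ.1 ⟨φ ⁻¹' ↑U, ⟨↑U, U.2, rfl⟩⟩ = γ.1 U) →
          θ.app V (hP.ι hU hc γ) = hQ.ι hU' hc' δ) →
      ∀ (V : Set Y), IsOpen V → Function.Injective (θ.app V)) :=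
  statement4_general R φ hφc Γ hM P hP Q hQ
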